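/- The mean function m(μ) = 2/μ - (1 + 2/μ) e^{-μ} of SSLUD(μ) is strictly decreasing on (0, ∞) and satisfies 0 < m(μ) < 1 for every μ > 0; consequently, for every value m̄ with 0 < m̄ < 1 there exists a unique μ > 0 with m(μ) = m̄. -/

import Mathlib

/-!
Writing `m μ = (2 e^μ - μ - 2) / (μ e^μ)`, the derivative of `m` has the sign of
`1 + μ + μ²/2 - e^μ < 0`, and `m μ < 1` amounts to `tanh (μ/2) < μ/2`; both inequalities
become equalities at `μ = 0` and are propagated by a derivative that is positive by `1 + x < e^x`.
For existence, the crude bounds `1 - μ < m μ < 2 / μ` bracket any target in `(0, 1)` on a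
compact interval, where the intermediate value theorem applies.
-/

open Real

noncomputable def m (μ : ℝ) : ℝ := 2 / μ - (1 + 2 / μ) * Real.exp (-μ)

lemma apply_zero_lt_of_hasDerivAt_pos {f f' : ℝ → ℝ}
    (hf : ∀ x, 0 ≤ x → HasDerivAt f (f' x) x) (hf' : ∀ x, 0 < x → 0 < f' x) {x : ℝ}
    (hx : 0 < x) : f 0 < f x := by
  have hmono : StrictMonoOn f (Set.Ici 0) :=
    strictMonoOn_of_hasDerivWithinAt_pos (convex_Ici 0)
      (fun y hy => (hf y hy).continuousAt.continuousWithinAt)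
      (fun y hy => (hf y (interior_subset hy)).hasDerivWithinAt)
      (fun y hy => hf' y (by simpa using hy))
  exact hmono Set.self_mem_Ici hx.le hx

lemma Real.quadratic_lt_exp_of_pos {x : ℝ} (hx : 0 < x) : 1 + x + x ^ 2 / 2 < exp x := by
  have hderiv (y : ℝ) :
      HasDerivAt (fun y => exp y - (1 + y + y ^ 2 / 2)) (exp y - (1 + y)) y := by
    refine ((hasDerivAt_exp y).sub (((hasDerivAt_id y).const_add 1).add
      ((hasDerivAt_pow 2 y).div_const 2))).congr_deriv ?_
    simp
  have := apply_zero_lt_of_hasDerivAt_pos (fun y _ => hderiv y)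
    (fun y hy => sub_pos.2 (by linarith [add_one_lt_exp hy.ne'])) hx
  simp only [exp_zero] at this
  linarith

lemma Real.two_mul_exp_sub_one_lt {x : ℝ} (hx : 0 < x) : 2 * (exp x - 1) < x * (exp x + 1) := by
  have hderiv (y : ℝ) : HasDerivAt (fun y => y * (exp y + 1) - 2 * (exp y - 1))
      (exp y * (y - 1 + exp (-y))) y := by
    refine (((hasDerivAt_id y).mul ((hasDerivAt_exp y).add_const 1)).sub
      (((hasDerivAt_exp y).sub_const 1).const_mul 2)).congr_deriv ?_
    simp only [id, mul_add, ← exp_add, add_neg_cancel, exp_zero]; ring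
  have := apply_zero_lt_of_hasDerivAt_pos (fun y _ => hderiv y)
    (fun y hy => mul_pos (exp_pos y) (by linarith [add_one_lt_exp (neg_ne_zero.2 hy.ne')])) hx
  simp only [exp_zero] at this
  linarith

lemma m_eq_div {μ : ℝ} (hμ : μ ≠ 0) : m μ = (2 * exp μ - μ - 2) / (μ * exp μ) := by
  rw [m, exp_neg]
  field_simp
  ring

lemma hasDerivAt_m {x : ℝ} (hx : x ≠ 0) :
    HasDerivAt m ((2 + 2 * x + x ^ 2 - 2 * exp x) / (x ^ 2 * exp x)) x := by
  have hinv : HasDerivAt (fun μ : ℝ => 2 / μ) (-2 / x ^ 2) x := by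
    simpa [div_eq_mul_inv, neg_div] using (hasDerivAt_inv hx).const_mul 2
  have hexp : HasDerivAt (fun μ : ℝ => exp (-μ)) (-exp (-x)) x := by
    simpa using (hasDerivAt_neg x).exp
  refine (hinv.sub ((hinv.const_add 1).mul hexp)).congr_deriv ?_
  rw [exp_neg]
  field_simp
  ring

lemma m_continuousOn : ContinuousOn m (Set.Ioi 0) :=
  fun _ hx => (hasDerivAt_m (ne_of_gt hx)).continuousAt.continuousWithinAt

lemma m_strictAntiOn : StrictAntiOn m (Set.Ioi 0) := by
  refine strictAntiOn_of_hasDerivWithinAt_neg (convex_Ioi 0) m_continuousOn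
    (fun x hx => (hasDerivAt_m (ne_of_gt (interior_subset hx : 0 < x))).hasDerivWithinAt)
    (fun x hx => ?_)
  rw [interior_Ioi, Set.mem_Ioi] at hx
  refine div_neg_of_neg_of_pos ?_ (by positivity)
  linarith [quadratic_lt_exp_of_pos hx]

lemma m_pos {μ : ℝ} (hμ : 0 < μ) : 0 < m μ := by
  rw [m_eq_div hμ.ne']
  exact div_pos (by linarith [add_one_lt_exp hμ.ne']) (by positivity)

lemma m_lt_one {μ : ℝ} (hμ : 0 < μ) : m μ < 1 := by
  rw [m_eq_div hμ.ne', div_lt_one (by positivity)]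
  linarith [two_mul_exp_sub_one_lt hμ]

lemma one_sub_lt_m {μ : ℝ} (hμ : 0 < μ) : 1 - μ < m μ := by
  -- `e^μ (2 - μ + μ²) > (1 + μ) (2 - μ + μ²) = 2 + μ + μ³`
  rw [m_eq_div hμ.ne', lt_div_iff₀ (by positivity)]
  nlinarith [add_one_lt_exp hμ.ne', exp_pos μ, mul_pos (mul_pos hμ hμ) hμ]

lemma m_lt_two_div {μ : ℝ} (hμ : 0 < μ) : m μ < 2 / μ := by
  rw [m, sub_lt_self_iff]
  positivity

theorem sslud_mean_monotone :
    StrictAntiOn m (Set.Ioi (0 : ℝ)) ∧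
    (∀ μ : ℝ, 0 < μ → 0 < m μ ∧ m μ < 1) ∧
    (∀ y : ℝ, 0 < y → y < 1 → ∃! μ : ℝ, 0 < μ ∧ m μ = y) := by
  refine ⟨m_strictAntiOn, fun μ hμ => ⟨m_pos hμ, m_lt_one hμ⟩, fun y hy₀ hy₁ => ?_⟩
  have ha : 0 < (1 - y) / 2 := by linarith
  have hb : 0 < 3 / y := by positivity
  have hya : y < m ((1 - y) / 2) := by linarith [one_sub_lt_m ha]
  have hby : m (3 / y) < y :=
    (m_lt_two_div hb).trans_le (by rw [div_div_eq_mul_div]; linarith)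
  have hab := (m_strictAntiOn.lt_iff_gt hb ha).1 (hby.trans hya)
  obtain ⟨μ, hμ, rfl⟩ := intermediate_value_Icc' hab.le
    (m_continuousOn.mono fun x hx => ha.trans_le hx.1) ⟨hby.le, hya.le⟩
  have hμ₀ : 0 < μ := ha.trans_le hμ.1
  exact ⟨μ, ⟨hμ₀, rfl⟩, fun ν hν => m_strictAntiOn.injOn hν.1 hμ₀ hν.2⟩
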